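/- arXiv:0903.2713 — 2 statements merged into one kernel-verified Lean document; each statement's English description precedes it below -/
import Mathlib

section
/- Let T > 0, p ≥ 0, and let f : [0,T] → [0,∞) be a C¹ function. Suppose there exist constants c₁ > 0 and c₂ ≥ 0 such that f'(t) ≤ -c₁ f(t)/(1+t)^p + c₂ √(f(t)) for all t ∈ [0,T]. Then f(t) ≤ f(0) + (c₂/c₁)² (1+t)^{2p} for all t ∈ [0,T]. -/
open Real Set Filter Topology

/-! Fix `t`. On `[0, t]` the constant `M = f 0 + (c₂ / c₁)² (1 + t)^(2p)` is a barrier: wherever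
`f x ≥ M` we have `√(f x) ≥ (c₂ / c₁) (1 + x)^p`, so the damping term `c₁ f / (1 + x)^p` dominates
the source term `c₂ √f` and `f' x ≤ 0`. A function whose derivative is nonpositive wherever it is
at least `M` cannot cross `M`, as comparison with the strictly increasing barriers `M + ε (x - a)`
shows. -/

theorem image_le_of_deriv_nonpos_of_le {f f' : ℝ → ℝ} {a b M : ℝ}
    (hf : ContinuousOn f (Icc a b)) (hf' : ∀ x ∈ Ico a b, HasDerivWithinAt f (f' x) (Ici x) x)
    (ha : f a ≤ M) (hM : ∀ x ∈ Ico a b, M ≤ f x → f' x ≤ 0) :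
    ∀ ⦃x⦄, x ∈ Icc a b → f x ≤ M := by
  intro x hx
  have hfence : ∀ ε > 0, f x ≤ M + ε * (x - a) := fun ε hε =>
    image_le_of_deriv_right_lt_deriv_boundary' hf hf' (by simpa using ha) (by fun_prop)
      (fun y _ => ((hasDerivAt_id' y).sub_const a |>.const_mul ε |>.const_add M).hasDerivWithinAt
        |>.congr_deriv (mul_one ε))
      (fun y hy hfy => (hM y hy (by nlinarith [mul_nonneg hε.le (sub_nonneg.2 hy.1)])).trans_lt hε) hx
  have hlim : Tendsto (fun ε : ℝ => M + ε * (x - a)) (𝓝[>] 0) (𝓝 M) := by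
    have hcont : Continuous fun ε : ℝ => M + ε * (x - a) := by fun_prop
    simpa using (hcont.tendsto 0).mono_left nhdsWithin_le_nhds
  exact ge_of_tendsto hlim (eventually_nhdsWithin_of_forall hfence)

theorem mul_sqrt_le_div_mul {a c d y : ℝ} (ha : 0 < a) (hd : 0 < d) (h : (c / a * d) ^ 2 ≤ y) :
    c * √y ≤ a / d * y := by
  have hy : √y ^ 2 = y := sq_sqrt ((sq_nonneg _).trans h)
  have hcd : c * d ≤ a * √y := by
    have := (le_abs_self _).trans (abs_le_sqrt h)
    rwa [div_mul_eq_mul_div, div_le_iff₀' ha] at this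
  rw [div_mul_eq_mul_div, le_div_iff₀ hd]
  nlinarith [sqrt_nonneg y]

theorem ode_comparison_lemma_general
    (T p c₁ c₂ : ℝ) (hp : 0 ≤ p) (hc₁ : 0 < c₁)
    (f f' : ℝ → ℝ)
    (hf_nonneg : ∀ t ∈ Icc (0:ℝ) T, 0 ≤ f t)
    (hf_deriv : ∀ t ∈ Icc (0:ℝ) T, HasDerivAt f (f' t) t)
    (hineq : ∀ t ∈ Icc (0:ℝ) T,
      f' t ≤ -c₁ / (1 + t) ^ p * f t + c₂ * Real.sqrt (f t)) :
    ∀ t ∈ Icc (0:ℝ) T, f t ≤ f 0 + (c₂ / c₁) ^ 2 * (1 + t) ^ (2 * p) := by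
  intro t ht
  have hsub : Icc 0 t ⊆ Icc 0 T := Icc_subset_Icc_right ht.2
  have hf0 : 0 ≤ f 0 := hf_nonneg 0 ⟨le_rfl, ht.1.trans ht.2⟩
  refine image_le_of_deriv_nonpos_of_le (a := 0) (b := t)
    (fun x hx => (hf_deriv x (hsub hx)).continuousAt.continuousWithinAt)
    (fun x hx => (hf_deriv x (hsub (Ico_subset_Icc_self hx))).hasDerivWithinAt)
    (by nlinarith [sq_nonneg (c₂ / c₁), rpow_nonneg (by linarith [ht.1] : (0:ℝ) ≤ 1 + t) (2 * p)])
    (fun x hxt hMx => ?_) (right_mem_Icc.2 ht.1)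
  have hx : x ∈ Icc 0 T := hsub (Ico_subset_Icc_self hxt)
  have h1x : 0 < 1 + x := by linarith [hx.1]
  have hpow : (1 + x) ^ (2 * p) ≤ (1 + t) ^ (2 * p) :=
    rpow_le_rpow h1x.le (by linarith [hxt.2]) (by positivity)
  have hsq : (c₂ / c₁ * (1 + x) ^ p) ^ 2 ≤ f x := by
    rw [mul_pow, ← rpow_mul_natCast h1x.le, mul_comm p]
    push_cast
    nlinarith [sq_nonneg (c₂ / c₁)]
  have hsource := mul_sqrt_le_div_mul hc₁ (rpow_pos_of_pos h1x p) hsq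
  have hx_ineq := hineq x hx
  rw [neg_div, neg_mul] at hx_ineq
  linarith

theorem ode_comparison_lemma
    (T p c₁ c₂ : ℝ) (hT : 0 < T) (hp : 0 ≤ p) (hc₁ : 0 < c₁) (hc₂ : 0 ≤ c₂)
    (f f' : ℝ → ℝ)
    (hf_nonneg : ∀ t ∈ Icc (0:ℝ) T, 0 ≤ f t)
    (hf_deriv : ∀ t ∈ Icc (0:ℝ) T, HasDerivAt f (f' t) t)
    (hf'_cont : ContinuousOn f' (Icc (0:ℝ) T))
    (hineq : ∀ t ∈ Icc (0:ℝ) T,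
      f' t ≤ -c₁ / (1 + t) ^ p * f t + c₂ * Real.sqrt (f t)) :
    ∀ t ∈ Icc (0:ℝ) T, f t ≤ f 0 + (c₂ / c₁) ^ 2 * (1 + t) ^ (2 * p) :=
  ode_comparison_lemma_general T p c₁ c₂ hp hc₁ f f' hf_nonneg hf_deriv hineq
end

section
/- Let p ≥ 0, γ > 0, α > 0, T > 0, let w : [0,T] → [0,∞) be C¹ with w(0) > 0, and let f : [0,T] → ℝ be continuous. Assume |∫₀ᵗ (1+s)^p f(s) ds| ≤ min{ 1/(4γ w(0)^γ), α/(2(p+1)) } (1+t)^{p+1} for all t ∈ [0,T]. If w satisfies w'(t) ≤ -2(1+t)^p w(t)^{1+γ} (α + f(t)) on [0,T], then w(t) ≤ w(0) [max{2, (p+1)/(αγ w(0)^γ)}]^{1/γ} · (1+t)^{-(p+1)/γ} for all t ∈ [0,T]. -/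
open Real Set intervalIntegral

/-! Substituting `v = w ^ (-γ)` turns the differential inequality into
`v' ≥ 2γ (1 + t) ^ p (α + f t)`, which integrates to
`v t ≥ v 0 + β ((1 + t) ^ (p + 1) - 1) + 2γ ∫₀ᵗ (1 + s) ^ p f s` with `β = 2γα / (p + 1)`.
The smallness assumption bounds the last term below by `-min (v 0) β * (1 + t) ^ (p + 1) / 2`,
which leaves `v t ≥ min (v 0) β * (1 + t) ^ (p + 1) / 2`, and `min (v 0) β / 2` is exactly
`1 / (w 0 ^ γ * max 2 ((p + 1) / (α γ w 0 ^ γ)))`.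
The substitution needs `w > 0` on `[0, t]`, which holds as soon as `w t > 0`: the inequality
gives `w' ≤ L w` for some constant `L`, so by Grönwall a zero of `w` persists. -/

theorem eq_zero_of_hasDerivAt_le_mul_of_nonneg {w w' c : ℝ → ℝ} {a b : ℝ}
    (hc : ContinuousOn c (Icc a b)) (hw : ∀ t ∈ Icc a b, 0 ≤ w t)
    (hderiv : ∀ t ∈ Icc a b, HasDerivAt w (w' t) t)
    (hle : ∀ t ∈ Icc a b, w' t ≤ c t * w t) (ha : w a = 0) :
    ∀ t ∈ Icc a b, w t = 0 := by
  obtain ⟨K, hK⟩ := isCompact_Icc.exists_bound_of_continuousOn hc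
  have hbound : ∀ t ∈ Ico a b, w' t ≤ K * w t + 0 := fun t ht => by
    have ht' := Ico_subset_Icc_self ht
    have hcK : c t ≤ K := (le_abs_self _).trans (hK t ht')
    nlinarith [hle t ht', hw t ht']
  intro t ht
  refine le_antisymm ?_ (hw t ht)
  calc w t ≤ gronwallBound 0 K 0 (t - a) :=
        le_gronwallBound_of_liminf_deriv_right_le
          (fun x hx => (hderiv x hx).continuousAt.continuousWithinAt)
          (fun x hx _ hr =>
            (hderiv x (Ico_subset_Icc_self hx)).hasDerivWithinAt.liminf_right_slope_le hr)
          ha.le hbound t ht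
    _ = 0 := gronwallBound_ε0_δ0 _ _

theorem pos_of_hasDerivAt_le_neg_mul_rpow {w w' g : ℝ → ℝ} {a b γ : ℝ} (hγ : 0 ≤ γ)
    (hg : ContinuousOn g (Icc a b)) (hw : ∀ t ∈ Icc a b, 0 ≤ w t)
    (hderiv : ∀ t ∈ Icc a b, HasDerivAt w (w' t) t)
    (hle : ∀ t ∈ Icc a b, w' t ≤ -(g t * w t ^ (1 + γ))) (hb : 0 < w b) :
    ∀ t ∈ Icc a b, 0 < w t := by
  intro s hs
  refine (hw s hs).lt_of_ne' fun hws => hb.ne' ?_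
  have hsub : Icc s b ⊆ Icc a b := Icc_subset_Icc_left hs.1
  have hwc : ContinuousOn w (Icc a b) := fun t ht =>
    (hderiv t ht).continuousAt.continuousWithinAt
  refine eq_zero_of_hasDerivAt_le_mul_of_nonneg (c := fun t => -(g t * w t ^ γ))
    ((hg.mul (hwc.rpow_const fun _ _ => Or.inr hγ)).neg.mono hsub)
    (fun t ht => hw t (hsub ht)) (fun t ht => hderiv t (hsub ht)) (fun t ht => ?_) hws
    b ⟨hs.2, le_rfl⟩
  have h := hle t (hsub ht)
  rw [rpow_add' (hw t (hsub ht)) (by linarith), rpow_one] at h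
  exact h.trans_eq (by ring)

theorem rpow_neg_add_integral_le {w w' g : ℝ → ℝ} {a b γ : ℝ} (hab : a ≤ b) (hγ : 0 ≤ γ)
    (hg : ContinuousOn g (Icc a b)) (hw : ∀ t ∈ Icc a b, 0 < w t)
    (hderiv : ∀ t ∈ Icc a b, HasDerivAt w (w' t) t)
    (hle : ∀ t ∈ Icc a b, w' t ≤ -(g t * w t ^ (1 + γ))) :
    w a ^ (-γ) + γ * ∫ t in a..b, g t ≤ w b ^ (-γ) := by
  have hderiv' : ∀ t ∈ Icc a b,
      HasDerivAt (fun t => w t ^ (-γ)) (w' t * (-γ) * w t ^ (-γ - 1)) t :=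
    fun t ht => (hderiv t ht).rpow_const (Or.inl (hw t ht).ne')
  have hslope : ∀ t ∈ Icc a b, γ * g t ≤ w' t * (-γ) * w t ^ (-γ - 1) := by
    intro t ht
    have hinv : w t ^ (1 + γ) * w t ^ (-γ - 1) = 1 := by
      rw [← rpow_add (hw t ht), show 1 + γ + (-γ - 1) = 0 by ring, rpow_zero]
    have hc : 0 ≤ γ * w t ^ (-γ - 1) := mul_nonneg hγ (rpow_nonneg (hw t ht).le _)
    have := mul_le_mul_of_nonneg_left (hle t ht) hc
    linear_combination this - γ * g t * hinv
  rw [← integral_const_mul, ← le_sub_iff_add_le']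
  exact integral_le_sub_of_hasDeriv_right_of_le hab
    (fun t ht => (hderiv' t ht).continuousAt.continuousWithinAt)
    (fun t ht => (hderiv' t (Ioo_subset_Icc_self ht)).hasDerivWithinAt)
    (continuousOn_const.mul hg).integrableOn_Icc
    (fun t ht => hslope t (Ioo_subset_Icc_self ht))

theorem integral_one_add_rpow {p t : ℝ} (hp : -1 < p) :
    ∫ s in (0:ℝ)..t, (1 + s) ^ p = ((1 + t) ^ (p + 1) - 1) / (p + 1) := by
  rw [integral_comp_add_left (fun x => x ^ p), integral_rpow (Or.inl hp), add_zero, one_rpow]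

theorem intervalIntegrable_one_add_rpow {p a b : ℝ} (hp : -1 < p) :
    IntervalIntegrable (fun s => (1 + s) ^ p) MeasureTheory.volume a b := by
  simpa using (intervalIntegrable_rpow' hp (a := 1 + a) (b := 1 + b)).comp_add_left 1

theorem integral_one_add_rpow_mul_add {p α t : ℝ} {f : ℝ → ℝ} (hp : -1 < p)
    (hf : IntervalIntegrable (fun s => (1 + s) ^ p * f s) MeasureTheory.volume 0 t) :
    ∫ s in (0:ℝ)..t, (1 + s) ^ p * (α + f s) =
      α * (((1 + t) ^ (p + 1) - 1) / (p + 1)) + ∫ s in (0:ℝ)..t, (1 + s) ^ p * f s := by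
  simp only [mul_add]
  rw [integral_add ((intervalIntegrable_one_add_rpow hp).mul_const α) hf,
    integral_mul_const, integral_one_add_rpow hp, mul_comm]

theorem div_mul_max_le_of_add_le {c γ α q A I y : ℝ} (hc : 0 < c) (hγ : 0 < γ) (hα : 0 < α)
    (hq : 0 < q) (hA : 1 ≤ A) (hI : |I| ≤ min (1 / (4 * γ * c)) (α / (2 * q)) * A)
    (hy : c⁻¹ + γ * (2 * (α * ((A - 1) / q) + I)) ≤ y) :
    A / (c * max 2 (q / (α * γ * c))) ≤ y := by
  set m := min (1 / (2 * c)) (α * γ / q)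
  have hK : 1 / (c * max 2 (q / (α * γ * c))) ≤ m := by
    refine le_min ?_ ?_
    · rw [mul_comm 2 c]
      exact one_div_le_one_div_of_le (by positivity) (by gcongr; exact le_max_left _ _)
    · calc 1 / (c * max 2 (q / (α * γ * c))) ≤ 1 / (c * (q / (α * γ * c))) :=
            one_div_le_one_div_of_le (by positivity) (by gcongr; exact le_max_right _ _)
        _ = α * γ / q := by field_simp
  have hM : 2 * γ * min (1 / (4 * γ * c)) (α / (2 * q)) ≤ m := by
    rw [mul_min_of_nonneg _ _ (by positivity)]
    refine min_le_min (le_of_eq ?_) (le_of_eq ?_)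
    · field_simp; norm_num
    · field_simp
  have hm_c : 2 * m ≤ c⁻¹ :=
    calc 2 * m ≤ 2 * (1 / (2 * c)) := by gcongr; exact min_le_left _ _
      _ = c⁻¹ := by field_simp
  have hm_β : 2 * m ≤ 2 * (α * γ / q) := by gcongr; exact min_le_right _ _
  have hI' : -(m * A) ≤ 2 * γ * I := by
    have := (neg_abs_le I).trans' (neg_le_neg hI)
    nlinarith
  calc A / (c * max 2 (q / (α * γ * c))) = 1 / (c * max 2 (q / (α * γ * c))) * A := by ring
    _ ≤ m * A := by gcongr
    _ ≤ c⁻¹ + γ * (2 * (α * ((A - 1) / q) + I)) := by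
      have : 2 * γ * (α * ((A - 1) / q)) = 2 * (α * γ / q) * (A - 1) := by ring
      nlinarith
    _ ≤ y := hy

theorem le_mul_rpow_of_div_le_rpow_neg {x x₀ K s q γ : ℝ} (hx : 0 < x) (hx₀ : 0 < x₀)
    (hK : 0 < K) (hs : 0 < s) (hγ : 0 < γ) (h : s ^ q / (x₀ ^ γ * K) ≤ x ^ (-γ)) :
    x ≤ x₀ * K ^ (1 / γ) * s ^ (-q / γ) := by
  rw [← rpow_le_rpow_iff hx.le (by positivity) hγ, mul_rpow (by positivity) (by positivity),
    mul_rpow hx₀.le (by positivity), ← rpow_mul hK.le, ← rpow_mul hs.le,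
    one_div_mul_cancel hγ.ne', rpow_one, div_mul_cancel₀ _ hγ.ne', rpow_neg hs.le,
    ← div_eq_mul_inv]
  rw [rpow_neg hx.le, le_inv_comm₀ (by positivity) (by positivity), inv_div] at h
  exact h

theorem ode_decay_subsolution_general
    (p γ α T : ℝ) (hp : 0 ≤ p) (hγ : 0 < γ) (hα : 0 < α)
    (w w' : ℝ → ℝ) (f : ℝ → ℝ)
    (hw_nonneg : ∀ t ∈ Icc (0:ℝ) T, 0 ≤ w t)
    (hw_deriv : ∀ t ∈ Icc (0:ℝ) T, HasDerivAt w (w' t) t)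
    (hw0 : 0 < w 0)
    (hf_cont : ContinuousOn f (Icc (0:ℝ) T))
    (hf_int : ∀ t ∈ Icc (0:ℝ) T,
      |∫ s in (0:ℝ)..t, (1 + s) ^ p * f s| ≤
        min (1 / (4 * γ * (w 0) ^ γ)) (α / (2 * (p + 1))) * (1 + t) ^ (p + 1))
    (hineq : ∀ t ∈ Icc (0:ℝ) T,
      w' t ≤ -2 * (1 + t) ^ p * (w t) ^ (1 + γ) * (α + f t)) :
    ∀ t ∈ Icc (0:ℝ) T,
      w t ≤ w 0 * (max 2 ((p + 1) / (α * γ * (w 0) ^ γ))) ^ (1 / γ) *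
        (1 + t) ^ (-(p + 1) / γ) := by
  intro t ht
  rcases (hw_nonneg t ht).eq_or_lt' with hwt | hwt
  · rw [hwt]
    exact mul_nonneg (mul_nonneg hw0.le (rpow_nonneg (le_max_of_le_left zero_le_two) _))
      (rpow_nonneg (by linarith [ht.1]) _)
  have hsub : Icc 0 t ⊆ Icc 0 T := Icc_subset_Icc_right ht.2
  have hrpow : ContinuousOn (fun s : ℝ => (1 + s) ^ p) (Icc 0 t) :=
    (continuousOn_const.add continuousOn_id).rpow_const fun _ _ => Or.inr hp
  set g : ℝ → ℝ := fun s => 2 * ((1 + s) ^ p * (α + f s))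
  have hg : ContinuousOn g (Icc 0 t) :=
    continuousOn_const.mul (hrpow.mul (continuousOn_const.add (hf_cont.mono hsub)))
  have hle : ∀ s ∈ Icc 0 t, w' s ≤ -(g s * w s ^ (1 + γ)) := fun s hs =>
    (hineq s (hsub hs)).trans_eq (by ring)
  have hderiv : ∀ s ∈ Icc 0 t, HasDerivAt w (w' s) s := fun s hs => hw_deriv s (hsub hs)
  have hpos := pos_of_hasDerivAt_le_neg_mul_rpow hγ.le hg (fun s hs => hw_nonneg s (hsub hs))
    hderiv hle hwt
  have hv := rpow_neg_add_integral_le ht.1 hγ.le hg hpos hderiv hle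
  rw [integral_const_mul, integral_one_add_rpow_mul_add (by linarith)
    ((hrpow.mul (hf_cont.mono hsub)).intervalIntegrable_of_Icc ht.1), rpow_neg hw0.le] at hv
  exact le_mul_rpow_of_div_le_rpow_neg hwt hw0 (lt_max_of_lt_left two_pos)
    (by linarith [ht.1]) hγ
    (div_mul_max_le_of_add_le (by positivity) hγ hα (by linarith)
      (one_le_rpow (by linarith [ht.1]) (by linarith)) (hf_int t ht) hv)

theorem ode_decay_subsolution
    (p γ α T : ℝ) (hp : 0 ≤ p) (hγ : 0 < γ) (hα : 0 < α) (hT : 0 < T)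
    (w w' : ℝ → ℝ) (f : ℝ → ℝ)
    (hw_nonneg : ∀ t ∈ Icc (0:ℝ) T, 0 ≤ w t)
    (hw_deriv : ∀ t ∈ Icc (0:ℝ) T, HasDerivAt w (w' t) t)
    (hw'_cont : ContinuousOn w' (Icc (0:ℝ) T))
    (hw0 : 0 < w 0)
    (hf_cont : ContinuousOn f (Icc (0:ℝ) T))
    (hf_int : ∀ t ∈ Icc (0:ℝ) T,
      |∫ s in (0:ℝ)..t, (1 + s) ^ p * f s| ≤
        min (1 / (4 * γ * (w 0) ^ γ)) (α / (2 * (p + 1))) * (1 + t) ^ (p + 1))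
    (hineq : ∀ t ∈ Icc (0:ℝ) T,
      w' t ≤ -2 * (1 + t) ^ p * (w t) ^ (1 + γ) * (α + f t)) :
    ∀ t ∈ Icc (0:ℝ) T,
      w t ≤ w 0 * (max 2 ((p + 1) / (α * γ * (w 0) ^ γ))) ^ (1 / γ) *
        (1 + t) ^ (-(p + 1) / γ) :=
  ode_decay_subsolution_general p γ α T hp hγ hα w w' f hw_nonneg hw_deriv hw0 hf_cont hf_int hineq
end
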